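/- arXiv:2207.02096 — 2 statements merged into one kernel-verified Lean document; each statement's English description precedes it below -/
import Mathlib

section
/- Let μ and ν be Borel probability measures on ℝ^d with finite second moment, let f : ℝ^d → ℝ be a convex function of at most linear growth, let ∇f : ℝ^d → ℝ^d be a Borel measurable map with ∇f(x) ∈ ∂f(x) (the subdifferential of f at x) for every x, and set ρ := (∇f)_# μ, the pushforward of μ under ∇f. Suppose (X,Y) are ℝ^d-valued random variables on some probability space such that X has law μ and the law of (∇f(X), Y) is an optimal coupling for W₂²(ρ, ν) (in particular Y has law ν). Then ½ ( W₂²(μ,ρ) − W₂²(ν,ρ) − E[|X|²] + E[|Y|²] ) ≤ ∫ f dν − ∫ f dμ. -/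
/-!
Integrating the subgradient inequality `f Y ≥ f X + ⟪∇f X, Y - X⟫` and expanding the inner
product by polarization, `⟪g, y - x⟫ = ½ (‖y‖² - ‖g - y‖² - ‖x‖² + ‖g - x‖²)`, gives the estimate
with `E ‖∇f X - X‖²` and `E ‖∇f X - Y‖²` in place of the two Wasserstein terms. The pair
`(∇f X, X)` couples `ρ` and `μ`, so the first dominates `W₂²(μ, ρ)`; the second is `W₂²(ρ, ν)` by
optimality. Linear growth of `f` forces linear growth of its subgradients, which makes every term
integrable under the second-moment assumptions.
-/

open MeasureTheory

/-- The squared 2-Wasserstein distance between two measures on `ℝ^d`: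
the infimum of `∫ ‖x - y‖²` over all couplings. -/
noncomputable def W2sq {d : ℕ}
    (μ ν : Measure (EuclideanSpace ℝ (Fin d))) : ℝ :=
  sInf { r : ℝ | ∃ π : Measure (EuclideanSpace ℝ (Fin d) × EuclideanSpace ℝ (Fin d)),
    π.map Prod.fst = μ ∧ π.map Prod.snd = ν ∧ r = ∫ p, ‖p.1 - p.2‖ ^ 2 ∂π }

open scoped RealInnerProductSpace

section Subgradient

variable {E : Type*} [NormedAddCommGroup E] [InnerProductSpace ℝ E]

theorem inner_sub_eq_half_sq_norm (g x y : E) :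
    ⟪g, y - x⟫ = (1 / 2) * (‖y‖ ^ 2 - ‖g - y‖ ^ 2 - ‖x‖ ^ 2 + ‖g - x‖ ^ 2) := by
  rw [norm_sub_sq_real, norm_sub_sq_real, inner_sub_right]
  ring

theorem norm_le_of_subgradient_of_abs_le {f : E → ℝ} {C : ℝ} {g x : E}
    (hsub : ∀ y, f x + ⟪g, y - x⟫ ≤ f y) (hC : ∀ z, |f z| ≤ C * (1 + ‖z‖)) :
    ‖g‖ ≤ 3 * C * (1 + ‖x‖) := by
  have hC0 : 0 ≤ C := by simpa using (abs_nonneg _).trans (hC 0)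
  rcases eq_or_ne g 0 with rfl | hg
  · rw [norm_zero]
    positivity
  set u := ‖g‖⁻¹ • g
  have hu : ‖u‖ = 1 := norm_smul_inv_norm hg
  have hgu : ⟪g, u⟫ = ‖g‖ := by
    rw [real_inner_smul_right, real_inner_self_eq_norm_sq]
    field_simp [norm_ne_zero_iff.mpr hg]
  have hstep := hsub (x + u)
  rw [add_sub_cancel_left, hgu] at hstep
  have hxu : ‖x + u‖ ≤ ‖x‖ + 1 := hu ▸ norm_add_le x u
  -- `‖g‖ ≤ f (x + u) - f x ≤ C * (2 + ‖x‖) + C * (1 + ‖x‖)`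
  nlinarith [le_of_abs_le (hC (x + u)), neg_le_of_abs_le (hC x),
    mul_le_mul_of_nonneg_left hxu hC0, mul_nonneg hC0 (norm_nonneg x)]

end Subgradient

namespace MeasureTheory.MemLp

variable {Ω E F : Type*} [MeasurableSpace Ω] {P : Measure Ω} {p : ENNReal}
  [NormedAddCommGroup E] [NormedAddCommGroup F]

theorem integrable_sq_norm {X : Ω → E} (hX : MemLp X 2 P) :
    Integrable (fun ω => ‖X ω‖ ^ 2) P :=
  (memLp_two_iff_integrable_sq_norm hX.1).1 hX

theorem of_integrable_sq_norm_map [MeasurableSpace E] [BorelSpace E] [SecondCountableTopology E]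
    {X : Ω → E} (hX : AEMeasurable X P) (h : Integrable (fun x => ‖x‖ ^ 2) (P.map X)) :
    MemLp X 2 P :=
  (memLp_two_iff_integrable_sq_norm hX.aestronglyMeasurable).2
    ((integrable_map_measure (by fun_prop) hX).1 h)

theorem comp_of_linear_growth [IsFiniteMeasure P] {X : Ω → E} {h : E → F} {C : ℝ}
    (hX : MemLp X p P) (hhX : AEStronglyMeasurable (fun ω => h (X ω)) P)
    (hC : ∀ z, ‖h z‖ ≤ C * (1 + ‖z‖)) : MemLp (fun ω => h (X ω)) p P := by
  have hbound : MemLp (fun ω => 1 + ‖X ω‖) p P := (memLp_const (1 : ℝ)).add hX.norm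
  refine hbound.of_le_mul (c := C) hhX (.of_forall fun ω => ?_)
  rw [Real.norm_of_nonneg (by positivity)]
  exact hC (X ω)

end MeasureTheory.MemLp

section Wasserstein

variable {d : ℕ}

theorem W2sq_le_integral {μ ν : Measure (EuclideanSpace ℝ (Fin d))}
    {π : Measure (EuclideanSpace ℝ (Fin d) × EuclideanSpace ℝ (Fin d))}
    (h1 : π.map Prod.fst = μ) (h2 : π.map Prod.snd = ν) :
    W2sq μ ν ≤ ∫ p, ‖p.1 - p.2‖ ^ 2 ∂π :=
  csInf_le ⟨0, by rintro r ⟨π, -, -, rfl⟩; positivity⟩ ⟨π, h1, h2, rfl⟩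

theorem exists_coupling_swap {μ ν : Measure (EuclideanSpace ℝ (Fin d))} {r : ℝ}
    (h : ∃ π : Measure (EuclideanSpace ℝ (Fin d) × EuclideanSpace ℝ (Fin d)),
      π.map Prod.fst = μ ∧ π.map Prod.snd = ν ∧ r = ∫ p, ‖p.1 - p.2‖ ^ 2 ∂π) :
    ∃ π : Measure (EuclideanSpace ℝ (Fin d) × EuclideanSpace ℝ (Fin d)),
      π.map Prod.fst = ν ∧ π.map Prod.snd = μ ∧ r = ∫ p, ‖p.1 - p.2‖ ^ 2 ∂π := by
  obtain ⟨π, h1, h2, rfl⟩ := h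
  refine ⟨π.map Prod.swap, ?_, ?_, ?_⟩
  · rwa [Measure.map_map measurable_fst measurable_swap]
  · rwa [Measure.map_map measurable_snd measurable_swap]
  · rw [integral_map measurable_swap.aemeasurable (by fun_prop)]
    simp only [Prod.fst_swap, Prod.snd_swap, norm_sub_rev]

theorem W2sq_comm (μ ν : Measure (EuclideanSpace ℝ (Fin d))) : W2sq μ ν = W2sq ν μ := by
  unfold W2sq
  congr 1
  ext r
  exact ⟨exists_coupling_swap, exists_coupling_swap⟩

variable {Ω : Type*} [MeasurableSpace Ω] {P : Measure Ω}

theorem integral_norm_sub_sq_map {A B : Ω → EuclideanSpace ℝ (Fin d)}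
    (hA : AEMeasurable A P) (hB : AEMeasurable B P) :
    ∫ p, ‖p.1 - p.2‖ ^ 2 ∂(P.map fun ω => (A ω, B ω)) = ∫ ω, ‖A ω - B ω‖ ^ 2 ∂P :=
  integral_map (hA.prodMk hB) (by fun_prop)

theorem W2sq_map_le_integral {A B : Ω → EuclideanSpace ℝ (Fin d)}
    (hA : Measurable A) (hB : Measurable B) :
    W2sq (P.map A) (P.map B) ≤ ∫ ω, ‖A ω - B ω‖ ^ 2 ∂P := by
  rw [← integral_norm_sub_sq_map hA.aemeasurable hB.aemeasurable]
  exact W2sq_le_integral (Measure.map_map measurable_fst (hA.prodMk hB))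
    (Measure.map_map measurable_snd (hA.prodMk hB))

end Wasserstein

section IntegratedSubgradient

variable {Ω E : Type*} [MeasurableSpace Ω] {P : Measure Ω}
  [NormedAddCommGroup E] [InnerProductSpace ℝ E]

theorem half_sq_norm_integral_le_of_subgradient {f : E → ℝ} {X Y G : Ω → E}
    (hX : MemLp X 2 P) (hY : MemLp Y 2 P) (hG : MemLp G 2 P)
    (hfX : Integrable (fun ω => f (X ω)) P) (hfY : Integrable (fun ω => f (Y ω)) P)
    (hsub : ∀ ω, f (X ω) + ⟪G ω, Y ω - X ω⟫ ≤ f (Y ω)) :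
    (1 / 2) * (∫ ω, ‖Y ω‖ ^ 2 ∂P - ∫ ω, ‖G ω - Y ω‖ ^ 2 ∂P - ∫ ω, ‖X ω‖ ^ 2 ∂P
        + ∫ ω, ‖G ω - X ω‖ ^ 2 ∂P)
      ≤ ∫ ω, f (Y ω) ∂P - ∫ ω, f (X ω) ∂P := by
  have hY2 := hY.integrable_sq_norm
  have hX2 := hX.integrable_sq_norm
  have hGY2 : Integrable (fun ω => ‖G ω - Y ω‖ ^ 2) P := (hG.sub hY).integrable_sq_norm
  have hGX2 : Integrable (fun ω => ‖G ω - X ω‖ ^ 2) P := (hG.sub hX).integrable_sq_norm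
  have hsum : Integrable (fun ω => ‖Y ω‖ ^ 2 - ‖G ω - Y ω‖ ^ 2 - ‖X ω‖ ^ 2 + ‖G ω - X ω‖ ^ 2) P :=
    ((hY2.sub hGY2).sub hX2).add hGX2
  calc (1 / 2) * (∫ ω, ‖Y ω‖ ^ 2 ∂P - ∫ ω, ‖G ω - Y ω‖ ^ 2 ∂P - ∫ ω, ‖X ω‖ ^ 2 ∂P
        + ∫ ω, ‖G ω - X ω‖ ^ 2 ∂P)
      = ∫ ω, ⟪G ω, Y ω - X ω⟫ ∂P := by
        simp only [inner_sub_eq_half_sq_norm]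
        rw [integral_const_mul, integral_add (by exact (hY2.sub hGY2).sub hX2) hGX2,
          integral_sub (by exact hY2.sub hGY2) hX2, integral_sub hY2 hGY2]
    _ ≤ ∫ ω, (f (Y ω) - f (X ω)) ∂P := by
        refine integral_mono ?_ (hfY.sub hfX) fun ω => by linarith [hsub ω]
        simp only [inner_sub_eq_half_sq_norm]
        exact hsum.const_mul _
    _ = ∫ ω, f (Y ω) ∂P - ∫ ω, f (X ω) ∂P := integral_sub hfY hfX

end IntegratedSubgradient

theorem subgradient_coupling_estimate_general {d : ℕ}
    (μ ν : Measure (EuclideanSpace ℝ (Fin d)))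
    (hμ2 : Integrable (fun x => ‖x‖ ^ 2) μ)
    (hν2 : Integrable (fun x => ‖x‖ ^ 2) ν)
    (f : EuclideanSpace ℝ (Fin d) → ℝ) (hf : ConvexOn ℝ Set.univ f)
    (hlin : ∃ C : ℝ, ∀ x, |f x| ≤ C * (1 + ‖x‖))
    (gradf : EuclideanSpace ℝ (Fin d) → EuclideanSpace ℝ (Fin d))
    (hgrad_meas : Measurable gradf)
    (hsub : ∀ x y, f x + inner ℝ (gradf x) (y - x) ≤ f y)
    (ρ : Measure (EuclideanSpace ℝ (Fin d))) (hρ : ρ = μ.map gradf)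
    {Ω : Type*} [MeasurableSpace Ω] (P : Measure Ω) [IsProbabilityMeasure P]
    (X Y : Ω → EuclideanSpace ℝ (Fin d)) (hX : Measurable X) (hY : Measurable Y)
    (hXlaw : P.map X = μ)
    (hopt2 : (P.map fun ω => (gradf (X ω), Y ω)).map Prod.snd = ν)
    (hopt : (∫ p, ‖p.1 - p.2‖ ^ 2 ∂(P.map fun ω => (gradf (X ω), Y ω))) = W2sq ρ ν) :
    (1 / 2 : ℝ) * (W2sq μ ρ - W2sq ν ρ - ∫ ω, ‖X ω‖ ^ 2 ∂P + ∫ ω, ‖Y ω‖ ^ 2 ∂P)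
      ≤ ∫ y, f y ∂ν - ∫ x, f x ∂μ := by
  obtain ⟨C, hC⟩ := hlin
  have hfc : Continuous f := continuousOn_univ.mp (hf.continuousOn isOpen_univ)
  have hG : Measurable fun ω => gradf (X ω) := hgrad_meas.comp hX
  have hYlaw : P.map Y = ν := by rwa [Measure.map_map measurable_snd (hG.prodMk hY)] at hopt2
  have hρlaw : ρ = P.map fun ω => gradf (X ω) := by
    rw [hρ, ← hXlaw, Measure.map_map hgrad_meas hX]
    rfl
  have hXL2 : MemLp X 2 P := .of_integrable_sq_norm_map hX.aemeasurable (hXlaw ▸ hμ2)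
  have hYL2 : MemLp Y 2 P := .of_integrable_sq_norm_map hY.aemeasurable (hYlaw ▸ hν2)
  have hGL2 : MemLp (fun ω => gradf (X ω)) 2 P :=
    hXL2.comp_of_linear_growth hG.aestronglyMeasurable fun x =>
      norm_le_of_subgradient_of_abs_le (hsub x) hC
  have hf_integrable {Z : Ω → EuclideanSpace ℝ (Fin d)} (hZ : Measurable Z) (hZL2 : MemLp Z 2 P) :
      Integrable (fun ω => f (Z ω)) P :=
    (hZL2.comp_of_linear_growth (hfc.comp_aestronglyMeasurable hZ.aestronglyMeasurable)
      hC).integrable one_le_two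
  have hWμρ : W2sq μ ρ ≤ ∫ ω, ‖gradf (X ω) - X ω‖ ^ 2 ∂P := by
    rw [W2sq_comm, hρlaw, ← hXlaw]
    exact W2sq_map_le_integral hG hX
  have hWνρ : W2sq ν ρ = ∫ ω, ‖gradf (X ω) - Y ω‖ ^ 2 ∂P := by
    rw [W2sq_comm, ← hopt, integral_norm_sub_sq_map hG.aemeasurable hY.aemeasurable]
  have hmain := half_sq_norm_integral_le_of_subgradient hXL2 hYL2 hGL2 (hf_integrable hX hXL2)
    (hf_integrable hY hYL2) fun ω => hsub (X ω) (Y ω)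
  have hfμ : ∫ x, f x ∂μ = ∫ ω, f (X ω) ∂P := by
    rw [← hXlaw, integral_map hX.aemeasurable hfc.aestronglyMeasurable]
  have hfν : ∫ y, f y ∂ν = ∫ ω, f (Y ω) ∂P := by
    rw [← hYlaw, integral_map hY.aemeasurable hfc.aestronglyMeasurable]
  linarith

theorem subgradient_coupling_estimate {d : ℕ}
    (μ ν : Measure (EuclideanSpace ℝ (Fin d)))
    [IsProbabilityMeasure μ] [IsProbabilityMeasure ν]
    (hμ2 : Integrable (fun x => ‖x‖ ^ 2) μ)
    (hν2 : Integrable (fun x => ‖x‖ ^ 2) ν)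
    (f : EuclideanSpace ℝ (Fin d) → ℝ) (hf : ConvexOn ℝ Set.univ f)
    (hlin : ∃ C : ℝ, ∀ x, |f x| ≤ C * (1 + ‖x‖))
    (gradf : EuclideanSpace ℝ (Fin d) → EuclideanSpace ℝ (Fin d))
    (hgrad_meas : Measurable gradf)
    (hsub : ∀ x y, f x + inner ℝ (gradf x) (y - x) ≤ f y)
    (ρ : Measure (EuclideanSpace ℝ (Fin d))) (hρ : ρ = μ.map gradf)
    {Ω : Type*} [MeasurableSpace Ω] (P : Measure Ω) [IsProbabilityMeasure P]
    (X Y : Ω → EuclideanSpace ℝ (Fin d)) (hX : Measurable X) (hY : Measurable Y)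
    (hXlaw : P.map X = μ)
    (hopt1 : (P.map fun ω => (gradf (X ω), Y ω)).map Prod.fst = ρ)
    (hopt2 : (P.map fun ω => (gradf (X ω), Y ω)).map Prod.snd = ν)
    (hopt : (∫ p, ‖p.1 - p.2‖ ^ 2 ∂(P.map fun ω => (gradf (X ω), Y ω))) = W2sq ρ ν) :
    (1 / 2 : ℝ) * (W2sq μ ρ - W2sq ν ρ - ∫ ω, ‖X ω‖ ^ 2 ∂P + ∫ ω, ‖Y ω‖ ^ 2 ∂P)
      ≤ ∫ y, f y ∂ν - ∫ x, f x ∂μ :=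
  subgradient_coupling_estimate_general μ ν hμ2 hν2 f hf hlin gradf hgrad_meas hsub ρ hρ P X Y hX hY
    hXlaw hopt2 hopt
end

section
/- Let μ be a Borel probability measure on ℝ^d with finite second moment, let f : ℝ^d → ℝ be a convex function, and let ∇f : ℝ^d → ℝ^d be a Borel measurable map with ∇f(x) ∈ ∂f(x) for every x, such that ∇f is square-integrable with respect to μ. Set ρ := (∇f)_# μ. Then the coupling (id, ∇f)_# μ is optimal for the squared 2-Wasserstein distance between μ and ρ; that is, W₂²(μ, ρ) = ∫ |x − ∇f(x)|² μ(dx). -/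
/-!
Kantorovich duality with the potentials `f` and its convex conjugate `f^*`. Every coupling `π`
of `μ` and `ρ` has the same marginal second moments, so its cost is
`∫ ‖x‖² dμ - 2 ∫ ⟪x, y⟫ dπ + ∫ ‖y‖² dρ` and it suffices to show that `π₀ = (id, ∇f)_# μ`
maximises `∫ ⟪x, y⟫ dπ`. By Fenchel–Young, `⟪x, y⟫ ≤ f x + f^* y`, hence
`∫ ⟪x, y⟫ dπ ≤ ∫ f dμ + ∫ f^* dρ` for every coupling, with equality for `π₀` because
`f^* (∇f u) = ⟪u, ∇f u⟫ - f u` (equality case of Fenchel–Young at a subgradient).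
-/

open MeasureTheory

open Set
open scoped RealInnerProductSpace

section Conjugate

variable {E : Type*} [NormedAddCommGroup E] [InnerProductSpace ℝ E]

/-- The convex conjugate `f^*`, computed as a supremum along a sequence `s` so that it is
measurable. For continuous `f` and dense `s` it agrees with `f^*` wherever the supremum is bounded,
and is junk (`0`) elsewhere. -/
noncomputable def seqConjugate (f : E → ℝ) (s : ℕ → E) (y : E) : ℝ :=
  ⨆ n, ⟪s n, y⟫ - f (s n)

theorem measurable_seqConjugate [MeasurableSpace E] [OpensMeasurableSpace E]
    (f : E → ℝ) (s : ℕ → E) : Measurable (seqConjugate f s) :=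
  Measurable.iSup fun _ => ((continuous_const.inner continuous_id).sub continuous_const).measurable

theorem measurableSet_bddAbove_seqConjugate [MeasurableSpace E] [OpensMeasurableSpace E]
    (f : E → ℝ) (s : ℕ → E) :
    MeasurableSet {y | BddAbove (range fun n => ⟪s n, y⟫ - f (s n))} :=
  measurableSet_bddAbove_range fun _ =>
    ((continuous_const.inner continuous_id).sub continuous_const).measurable

theorem inner_le_add_seqConjugate {f : E → ℝ} {s : ℕ → E} (hf : Continuous f) (hs : DenseRange s)
    {y : E} (hy : BddAbove (range fun n => ⟪s n, y⟫ - f (s n))) (x : E) :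
    ⟪x, y⟫ ≤ f x + seqConjugate f s y := by
  have hclosed : IsClosed {x | ⟪x, y⟫ - f x ≤ seqConjugate f s y} :=
    isClosed_le ((continuous_id.inner continuous_const).sub hf) continuous_const
  have hx : ⟪x, y⟫ - f x ≤ seqConjugate f s y :=
    hclosed.closure_subset_iff.2 (range_subset_iff.2 fun n => le_ciSup hy n) (hs x)
  linarith

def IsSubgradientSelection (f : E → ℝ) (g : E → E) : Prop :=
  ∀ x y, f x + ⟪g x, y - x⟫ ≤ f y

variable {f : E → ℝ} {g : E → E}

theorem inner_sub_le_of_subgradient (hsub : IsSubgradientSelection f g) (u x : E) :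
    ⟪x, g u⟫ - f x ≤ ⟪u, g u⟫ - f u := by
  have h := hsub u x
  rw [inner_sub_right, real_inner_comm x, real_inner_comm u] at h
  linarith

theorem bddAbove_of_subgradient (hsub : IsSubgradientSelection f g) (s : ℕ → E) (u : E) :
    BddAbove (range fun n => ⟪s n, g u⟫ - f (s n)) :=
  ⟨_, forall_mem_range.2 fun n => inner_sub_le_of_subgradient hsub u (s n)⟩

theorem seqConjugate_subgradient {s : ℕ → E} (hf : Continuous f) (hs : DenseRange s)
    (hsub : IsSubgradientSelection f g) (u : E) :
    seqConjugate f s (g u) = ⟪u, g u⟫ - f u :=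
  le_antisymm (ciSup_le fun n => inner_sub_le_of_subgradient hsub u (s n))
    (by linarith [inner_le_add_seqConjugate hf hs (bddAbove_of_subgradient hsub s u) u])

end Conjugate

section SecondMoments

variable {α E : Type*} {m : MeasurableSpace α} {μ : Measure α}
  [NormedAddCommGroup E] [InnerProductSpace ℝ E]

theorem MeasureTheory.MemLp.integrable_inner {X Y : α → E} (hX : MemLp X 2 μ)
    (hY : MemLp Y 2 μ) : Integrable (fun a => ⟪X a, Y a⟫) μ :=
  (L2.integrable_inner (hX.toLp X) (hY.toLp Y)).congr <| by
    filter_upwards [hX.coeFn_toLp, hY.coeFn_toLp] with a hXa hYa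
    rw [hXa, hYa]

theorem integral_norm_sub_sq {X Y : α → E} (hX : MemLp X 2 μ) (hY : MemLp Y 2 μ) :
    ∫ a, ‖X a - Y a‖ ^ 2 ∂μ =
      ∫ a, ‖X a‖ ^ 2 ∂μ - 2 * ∫ a, ⟪X a, Y a⟫ ∂μ + ∫ a, ‖Y a‖ ^ 2 ∂μ := by
  have hXX := hX.integrable_norm_pow two_ne_zero
  have hXY := (hX.integrable_inner hY).const_mul 2
  simp_rw [norm_sub_sq_real]
  rw [integral_add (f := fun a => ‖X a‖ ^ 2 - 2 * ⟪X a, Y a⟫) (hXX.sub hXY)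
    (hY.integrable_norm_pow two_ne_zero), integral_sub hXX hXY, integral_const_mul]

theorem integrable_of_subgradient [MeasurableSpace E] [OpensMeasurableSpace E] {μ : Measure E}
    [IsFiniteMeasure μ] {f : E → ℝ} {g : E → E} (hf : Continuous f)
    (hsub : IsSubgradientSelection f g) (hid : MemLp id 2 μ) (hg : MemLp g 2 μ) :
    Integrable f μ := by
  -- `f 0 + ⟪g 0, x⟫ ≤ f x ≤ f 0 + ⟪g x, x⟫`: subgradient inequalities at `0` and at `x`
  refine integrable_of_le_of_le (g₁ := fun x => f 0 + ⟪g 0, x⟫) (g₂ := fun x => f 0 + ⟪g x, x⟫)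
    hf.aestronglyMeasurable (ae_of_all _ fun x => by simpa using hsub 0 x)
    (ae_of_all _ fun x => ?_) ((integrable_const _).add ((memLp_const (g 0)).integrable_inner hid))
    ((integrable_const _).add (hg.integrable_inner hid))
  have h := hsub x 0
  rw [zero_sub, inner_neg_right] at h
  linarith

end SecondMoments

section Couplings

theorem integral_le_add_of_ae_le {α β : Type*} [MeasurableSpace α] [MeasurableSpace β]
    {π : Measure (α × β)} {μ : Measure α} {ν : Measure β}
    (h₁ : π.map Prod.fst = μ) (h₂ : π.map Prod.snd = ν) {c : α × β → ℝ} {a : α → ℝ} {b : β → ℝ}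
    (hc : Integrable c π) (ha : Integrable a μ) (hb : Integrable b ν)
    (hle : ∀ᵐ p ∂π, c p ≤ a p.1 + b p.2) :
    ∫ p, c p ∂π ≤ ∫ x, a x ∂μ + ∫ y, b y ∂ν := by
  subst h₁ h₂
  have ha' : Integrable (fun p : α × β => a p.1) π := ha.comp_measurable measurable_fst
  have hb' : Integrable (fun p : α × β => b p.2) π := hb.comp_measurable measurable_snd
  rw [integral_map measurable_fst.aemeasurable ha.aestronglyMeasurable,
    integral_map measurable_snd.aemeasurable hb.aestronglyMeasurable, ← integral_add ha' hb']
  exact integral_mono_ae hc (ha'.add hb') hle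

variable {E : Type*} [NormedAddCommGroup E] [InnerProductSpace ℝ E]
  [MeasurableSpace E] {μ ν : Measure E} {π : Measure (E × E)}

theorem integrable_inner_of_coupling (h₁ : π.map Prod.fst = μ) (h₂ : π.map Prod.snd = ν)
    (hμ : MemLp id 2 μ) (hν : MemLp id 2 ν) : Integrable (fun p : E × E => ⟪p.1, p.2⟫) π :=
  ((h₁ ▸ hμ).comp_of_map measurable_fst.aemeasurable).integrable_inner
    ((h₂ ▸ hν).comp_of_map measurable_snd.aemeasurable)

theorem integral_norm_sub_sq_of_coupling [OpensMeasurableSpace E]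
    (h₁ : π.map Prod.fst = μ) (h₂ : π.map Prod.snd = ν) (hμ : MemLp id 2 μ) (hν : MemLp id 2 ν) :
    ∫ p, ‖p.1 - p.2‖ ^ 2 ∂π =
      ∫ x, ‖x‖ ^ 2 ∂μ - 2 * ∫ p, ⟪p.1, p.2⟫ ∂π + ∫ y, ‖y‖ ^ 2 ∂ν := by
  subst h₁ h₂
  rw [integral_map measurable_fst.aemeasurable (by fun_prop),
    integral_map measurable_snd.aemeasurable (by fun_prop)]
  exact integral_norm_sub_sq (hμ.comp_of_map measurable_fst.aemeasurable)
    (hν.comp_of_map measurable_snd.aemeasurable)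

theorem integral_inner_le_of_subgradient [OpensMeasurableSpace E]
    [TopologicalSpace.SeparableSpace E] [IsFiniteMeasure μ] {f : E → ℝ} {g : E → E}
    (hf : Continuous f) (hsub : IsSubgradientSelection f g)
    (hg_meas : Measurable g) (hid : MemLp id 2 μ) (hg : MemLp g 2 μ)
    (h₁ : π.map Prod.fst = μ) (h₂ : π.map Prod.snd = μ.map g) :
    ∫ p, ⟪p.1, p.2⟫ ∂π ≤ ∫ x, ⟪x, g x⟫ ∂μ := by
  obtain ⟨s, hs⟩ := TopologicalSpace.exists_dense_seq E
  have hf_int := integrable_of_subgradient hf hsub hid hg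
  have hgap_int : Integrable (fun u => ⟪u, g u⟫ - f u) μ := (hid.integrable_inner hg).sub hf_int
  have hconj_comp : seqConjugate f s ∘ g = fun u => ⟪u, g u⟫ - f u :=
    funext (seqConjugate_subgradient hf hs hsub)
  have hconj_int : Integrable (seqConjugate f s) (μ.map g) :=
    (integrable_map_measure (measurable_seqConjugate f s).aestronglyMeasurable
      hg_meas.aemeasurable).2 (hconj_comp ▸ hgap_int)
  have hbdd : ∀ᵐ y ∂π.map Prod.snd, BddAbove (range fun n => ⟪s n, y⟫ - f (s n)) := by
    rw [h₂, ae_map_iff hg_meas.aemeasurable (measurableSet_bddAbove_seqConjugate f s)]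
    exact ae_of_all _ (bddAbove_of_subgradient hsub s)
  have hgid : MemLp id 2 (μ.map g) :=
    (memLp_map_measure_iff aestronglyMeasurable_id hg_meas.aemeasurable).2 hg
  calc ∫ p, ⟪p.1, p.2⟫ ∂π
      ≤ ∫ x, f x ∂μ + ∫ y, seqConjugate f s y ∂μ.map g :=
        integral_le_add_of_ae_le h₁ h₂ (integrable_inner_of_coupling h₁ h₂ hid hgid) hf_int
          hconj_int <|
          (ae_of_ae_map measurable_snd.aemeasurable hbdd).mono fun p hp =>
            inner_le_add_seqConjugate hf hs hp p.1
    _ = ∫ x, f x ∂μ + ∫ x, ⟪x, g x⟫ - f x ∂μ := by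
        rw [integral_map hg_meas.aemeasurable (measurable_seqConjugate f s).aestronglyMeasurable,
          ← hconj_comp]
        rfl
    _ = ∫ x, ⟪x, g x⟫ ∂μ := by
        rw [← integral_add hf_int hgap_int]
        simp

end Couplings

theorem subgradient_pushforward_optimal {d : ℕ}
    (μ : Measure (EuclideanSpace ℝ (Fin d))) [IsProbabilityMeasure μ]
    (hμ2 : Integrable (fun x => ‖x‖ ^ 2) μ)
    (f : EuclideanSpace ℝ (Fin d) → ℝ) (hf : ConvexOn ℝ Set.univ f)
    (gradf : EuclideanSpace ℝ (Fin d) → EuclideanSpace ℝ (Fin d))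
    (hgrad_meas : Measurable gradf)
    (hsub : ∀ x y, f x + inner ℝ (gradf x) (y - x) ≤ f y)
    (hgrad2 : Integrable (fun x => ‖gradf x‖ ^ 2) μ)
    (ρ : Measure (EuclideanSpace ℝ (Fin d))) (hρ : ρ = μ.map gradf) :
    W2sq μ ρ = ∫ x, ‖x - gradf x‖ ^ 2 ∂μ := by
  subst hρ
  have hfc : Continuous f := continuousOn_univ.mp (hf.continuousOn isOpen_univ)
  have hid : MemLp id 2 μ := (memLp_two_iff_integrable_sq_norm aestronglyMeasurable_id).2 hμ2
  have hg : MemLp gradf 2 μ :=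
    (memLp_two_iff_integrable_sq_norm hgrad_meas.aestronglyMeasurable).2 hgrad2
  have hgid : MemLp id 2 (μ.map gradf) :=
    (memLp_map_measure_iff aestronglyMeasurable_id hgrad_meas.aemeasurable).2 hg
  set π₀ := μ.map fun x => (x, gradf x)
  have hπ₀_fst : π₀.map Prod.fst = μ :=
    (Measure.fst_map_prodMk (X := id) hgrad_meas).trans Measure.map_id
  have hπ₀_snd : π₀.map Prod.snd = μ.map gradf := Measure.snd_map_prodMk measurable_id
  have hmeas : Measurable fun x => (x, gradf x) := measurable_id.prodMk hgrad_meas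
  have hπ₀_cost : ∫ p, ‖p.1 - p.2‖ ^ 2 ∂π₀ = ∫ x, ‖x - gradf x‖ ^ 2 ∂μ :=
    integral_map hmeas.aemeasurable (by fun_prop)
  have hπ₀_inner : ∫ p, ⟪p.1, p.2⟫ ∂π₀ = ∫ x, ⟪x, gradf x⟫ ∂μ :=
    integral_map hmeas.aemeasurable (by fun_prop)
  refine IsLeast.csInf_eq ⟨⟨π₀, hπ₀_fst, hπ₀_snd, hπ₀_cost.symm⟩, ?_⟩
  rintro _ ⟨π, h₁, h₂, rfl⟩
  rw [← hπ₀_cost, integral_norm_sub_sq_of_coupling hπ₀_fst hπ₀_snd hid hgid,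
    integral_norm_sub_sq_of_coupling h₁ h₂ hid hgid, hπ₀_inner]
  linarith [integral_inner_le_of_subgradient hfc hsub hgrad_meas hid hg h₁ h₂]
end
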